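/- arXiv:2403.12527 — 6 statements merged into one kernel-verified Lean document; each statement's English description precedes it below -/
import Mathlib

section
/- For λ ∈ ℂ*, the 𝒟-module Ω(λ) is simple: every nonzero 𝒟-submodule of Ω(λ) equals Ω(λ). -/
open Polynomial

/-- Action of `t` on `Ω(λ) = ℂ[x]`: `f(x) ↦ λ f(x-1)`. -/
noncomputable def tAct (lam : ℂ) (f : ℂ[X]) : ℂ[X] := lam • f.comp (X - C 1)

/-- Action of `t⁻¹` on `Ω(λ)`: `f(x) ↦ λ⁻¹ f(x+1)`. -/
noncomputable def tInvAct (lam : ℂ) (f : ℂ[X]) : ℂ[X] := lam⁻¹ • f.comp (X + C 1)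

/-- Action of `D = t ∂_t` on `Ω(λ)`: multiplication by `x`. -/
noncomputable def dAct (f : ℂ[X]) : ℂ[X] := X * f

/-- For `λ ≠ 0`, the `𝒟`-module `Ω(λ)` is simple: every nonzero subspace closed under
the actions of `t`, `t⁻¹` and `D` is the whole space. -/
theorem stmt2 (lam : ℂ) (hlam : lam ≠ 0) (N : Submodule ℂ ℂ[X])
    (hT : ∀ f ∈ N, tAct lam f ∈ N) (hTi : ∀ f ∈ N, tInvAct lam f ∈ N)
    (hD : ∀ f ∈ N, dAct f ∈ N) (hN : N ≠ ⊥) : N = ⊤ := by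
  -- N is closed under the shift f(x) ↦ f(x+1)
  have hShift : ∀ f ∈ N, f.comp (X + C 1) ∈ N := by
    intro f hf
    have h := N.smul_mem lam (hTi f hf)
    simpa [tInvAct, smul_smul, mul_inv_cancel₀ hlam] using h
  -- N is closed under multiplication by any polynomial
  have hMul : ∀ (p f : ℂ[X]), f ∈ N → p * f ∈ N := by
    intro p
    induction p using Polynomial.induction_on with
    | C a =>
      intro f hf
      simpa [smul_eq_C_mul] using N.smul_mem a hf
    | add p q hp hq =>
      intro f hf
      have := N.add_mem (hp f hf) (hq f hf)
      simpa [add_mul] using this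
    | monomial n a ih =>
      intro f hf
      have h1 : C a * X ^ n * f ∈ N := ih f hf
      have h2 := hD _ h1
      have : X * (C a * X ^ n * f) = C a * X ^ (n + 1) * f := by ring
      simpa [dAct, this] using h2
  -- a nonzero element of N produces 1 ∈ N, by induction on degree
  have key : ∀ n : ℕ, ∀ f : ℂ[X], f ∈ N → f ≠ 0 → f.natDegree = n → (1 : ℂ[X]) ∈ N := by
    intro n
    induction n using Nat.strong_induction_on with
    | _ n ih =>
      intro f hfN hf0 hn
      by_cases h0 : n = 0
      · -- f is a nonzero constant
        subst h0
        obtain ⟨a, ha⟩ : ∃ a : ℂ, f = C a := ⟨f.coeff 0, Polynomial.eq_C_of_natDegree_eq_zero hn⟩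
        have hc : a ≠ 0 := fun h => hf0 (by rw [ha, h, map_zero])
        have h1 : a⁻¹ • f = 1 := by
          rw [ha, Polynomial.smul_C, smul_eq_mul, inv_mul_cancel₀ hc, map_one]
        exact h1 ▸ N.smul_mem _ hfN
      · -- difference g = f(x+1) - f(x) is nonzero of smaller degree
        have hC1 : (C 1 : ℂ[X]) = 1 := Polynomial.C_1
        set g : ℂ[X] := f.comp (X + C 1) - f with hg
        have hgN : g ∈ N := N.sub_mem (hShift f hfN) hfN
        have hne : g ≠ 0 := by
          intro hz
          have heq : ∀ m : ℕ, f.eval (m : ℂ) = f.eval 0 := by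
            intro m
            induction m with
            | zero => simp
            | succ k hk =>
              have h2 := congrArg (fun p => Polynomial.eval (k : ℂ) p) hz
              simp [hg, Polynomial.eval_comp] at h2
              rw [sub_eq_zero] at h2
              push_cast
              rw [h2]
              exact hk
          have hroots : {z : ℂ | (f - C (f.eval 0)).IsRoot z}.Infinite := by
            apply Set.Infinite.mono (s := Set.range ((↑) : ℕ → ℂ))
            · rintro z ⟨m, rfl⟩
              simp [Polynomial.IsRoot, heq m]
            · exact Set.infinite_range_of_injective Nat.cast_injective
          have hfc : f - C (f.eval 0) = 0 :=
            Polynomial.eq_zero_of_infinite_isRoot _ hroots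
          apply h0
          rw [← hn, sub_eq_zero.mp hfc, Polynomial.natDegree_C]
        -- degree drops
        have hqdeg : ((X : ℂ[X]) + C 1).natDegree = 1 := Polynomial.natDegree_X_add_C 1
        have hcomp_deg : (f.comp (X + C 1)).natDegree = n := by
          rw [Polynomial.natDegree_comp, hqdeg, mul_one, hn]
        have hcc := Polynomial.coeff_comp_degree_mul_degree
          (p := f) (q := X + C 1) (by rw [hqdeg]; norm_num)
        rw [hqdeg, mul_one] at hcc
        have hlc : ((X : ℂ[X]) + C 1).leadingCoeff = 1 := Polynomial.monic_X_add_C 1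
        rw [hlc, one_pow] at hcc
        have hcoeff : g.coeff n = 0 := by
          rw [hg, Polynomial.coeff_sub, ← hn, hcc, Polynomial.leadingCoeff, mul_one, sub_self]
        have hdegle : g.natDegree ≤ n := by
          rw [hg]
          refine le_trans (Polynomial.natDegree_sub_le _ _) ?_
          rw [hcomp_deg, hn, max_self]
        have hdeg : g.natDegree < n := by
          rcases lt_or_eq_of_le hdegle with h | h
          · exact h
          · exfalso
            apply hne
            have hl : g.leadingCoeff = 0 := by rw [Polynomial.leadingCoeff, h, hcoeff]
            exact Polynomial.leadingCoeff_eq_zero.mp hl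
        exact ih g.natDegree hdeg g hgN hne rfl
  have hOne : (1 : ℂ[X]) ∈ N := by
    obtain ⟨f, hfN, hf0⟩ := (Submodule.ne_bot_iff N).mp hN
    exact key f.natDegree f hfN hf0 rfl
  -- conclude
  rw [eq_top_iff]
  intro p _
  simpa using hMul p 1 hOne
end

section
/- The spectral shift map δ defined on the N=2 Neveu–Schwarz algebra by δ(L_m) = L_m + ½H_m + δ_{m,0}C/24, δ(H_m) = H_m + δ_{m,0}C/6, δ(G^±_p) = G^±_{p±1/2}, δ(C) = C preserves the bracket [L_m, L_n]: one has [δ(L_m), δ(L_n)] = δ([L_m, L_n]) when computed using the Ramond-sector relations. -/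
/-- The spectral shift map `δ(L_m) = L_m + ½H_m + δ_{m,0}C/24`, `δ(H_m) = H_m + δ_{m,0}C/6`,
`δ(C) = C` preserves the bracket `[L_m, L_n]` when computed with the Ramond-sector
relations of the N=2 superconformal algebra:
`[δ(L_m), δ(L_n)] = δ((m-n)L_{m+n} + (m³-m)/12 δ_{m+n,0} C)`. -/
theorem stmt6 {L : Type*} [LieRing L] [LieAlgebra ℂ L]
    (Lo H : ℤ → L) (C : L)
    (hLL : ∀ m n : ℤ, ⁅Lo m, Lo n⁆ = ((m : ℂ) - n) • Lo (m + n)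
      + (if m + n = 0 then (((m : ℂ) ^ 3 - m) / 12) • C else 0))
    (hHH : ∀ m n : ℤ, ⁅H m, H n⁆ = if m + n = 0 then ((m : ℂ) / 3) • C else 0)
    (hLH : ∀ m n : ℤ, ⁅Lo m, H n⁆ = (-(n : ℂ)) • H (m + n))
    (hC : ∀ x : L, ⁅C, x⁆ = 0) :
    ∀ m n : ℤ,
      ⁅Lo m + (1/2 : ℂ) • H m + (if m = 0 then (1/24 : ℂ) • C else 0),
        Lo n + (1/2 : ℂ) • H n + (if n = 0 then (1/24 : ℂ) • C else 0)⁆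
      = ((m : ℂ) - n) • (Lo (m + n) + (1/2 : ℂ) • H (m + n)
            + (if m + n = 0 then (1/24 : ℂ) • C else 0))
        + (if m + n = 0 then (((m : ℂ) ^ 3 - m) / 12) • C else 0) := by
  intro m n
  have hC' : ∀ x : L, ⁅x, C⁆ = 0 := fun x => by rw [← lie_skew, hC, neg_zero]
  have hHL : ∀ a b : ℤ, ⁅H a, Lo b⁆ = (a : ℂ) • H (a + b) := fun a b => by
    rw [← lie_skew, hLH, add_comm b a]; module
  simp only [add_lie, lie_add, lie_smul, smul_lie, hLL, hHH, hLH, hHL, hC, hC',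
    lie_zero, zero_lie, smul_zero, smul_add, smul_smul, smul_ite, zero_add, add_zero]
  rcases eq_or_ne (m + n) 0 with h1 | h1
  · obtain rfl : n = -m := by omega
    rcases eq_or_ne m 0 with rfl | h2
    · simp [neg_zero, add_zero, Int.cast_zero, if_pos rfl, hC, hC', lie_smul, smul_lie, zero_lie, lie_zero, smul_zero, zero_add, add_zero]
    · simp [if_neg h2, if_neg (neg_ne_zero.mpr h2), if_pos h1, hC, hC', lie_smul, smul_lie, zero_lie, lie_zero, smul_zero, zero_add, add_zero]
      module
  · rcases eq_or_ne m 0 with rfl | hm <;> rcases eq_or_ne n 0 with rfl | hn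
    · exact absurd rfl h1
    · simp [if_pos rfl, if_neg hn, if_neg h1, Int.cast_zero, hC, hC', lie_smul, smul_lie, zero_lie, lie_zero, smul_zero, zero_add, add_zero]
      module
    · simp [if_neg hm, if_pos rfl, if_neg h1, Int.cast_zero, hC, hC', lie_smul, smul_lie, zero_lie, lie_zero, smul_zero, zero_add, add_zero]
      module
    · simp [if_neg hm, if_neg hn, if_neg h1, hC, hC', lie_smul, smul_lie, zero_lie, lie_zero, smul_zero, zero_add, add_zero]
      module
end

section
/- The spectral shift map δ preserves the bracket [G^-_p, G^+_q]: with δ(G^±_p) = G^±_{p±1/2}, δ(L_m) = L_m + ½H_m + δ_{m,0}C/24, δ(H_m) = H_m + δ_{m,0}C/6, one has [δ(G^-_p), δ(G^+_q)] computed in the Ramond sector equals δ(2L_{p+q} - (p-q)H_{p+q} + (4p²-1)/12 δ_{p+q,0}C), for p, q ∈ ℤ + 1/2. -/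
/-- The spectral shift map `δ` preserves the odd-odd bracket `[G⁻_p, G⁺_q]` for
half-integers `p = r + 1/2`, `q = s + 1/2`: computing the anticommutator
`[δ(G⁻_p), δ(G⁺_q)] = [G⁻_{p-1/2}, G⁺_{q+1/2}] = [G⁻_r, G⁺_{s+1}]` with the Ramond-sector
relations yields `δ(2L_{p+q} - (p-q)H_{p+q} + (4p²-1)/12 δ_{p+q,0} C)`. -/
theorem stmt7 {A : Type*} [Ring A] [Algebra ℂ A]
    (L H : ℤ → A) (C : A) (Gp Gm : ℤ → A)
    (hGG : ∀ a b : ℤ, Gm a * Gp b + Gp b * Gm a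
      = (2 : ℂ) • L (a + b) - ((a : ℂ) - b) • H (a + b)
        + (if a + b = 0 then ((4 * (a : ℂ) ^ 2 - 1) / 12) • C else 0)) :
    ∀ r s : ℤ,
      Gm r * Gp (s + 1) + Gp (s + 1) * Gm r
      = (2 : ℂ) • (L (r + s + 1) + (1/2 : ℂ) • H (r + s + 1)
            + (if r + s + 1 = 0 then (1/24 : ℂ) • C else 0))
        - (((r : ℂ) + 1/2) - ((s : ℂ) + 1/2)) • (H (r + s + 1)
            + (if r + s + 1 = 0 then (1/6 : ℂ) • C else 0))
        + (if r + s + 1 = 0 then ((4 * ((r : ℂ) + 1/2) ^ 2 - 1) / 12) • C else 0) := by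
  intro r s
  have h := hGG r (s + 1)
  rw [show r + (s + 1) = r + s + 1 by ring] at h
  push_cast at h
  rw [h]
  by_cases hc : r + s + 1 = 0
  · have hr : (s : ℂ) = -(r : ℂ) - 1 := by
      have : ((r + s + 1 : ℤ) : ℂ) = 0 := by rw [hc]; norm_num
      push_cast at this; linear_combination this
    simp only [if_pos hc, hr]
    match_scalars <;> ring
  · simp only [if_neg hc, smul_zero, add_zero]
    match_scalars <;> ring
end

section
/- For b ∈ ℂ, the twisted operators σ_b satisfy the odd-odd relation [σ_b(G^-_p), σ_b(G^+_q)] = 2σ_b(L_{p+q}) - (p-q)σ_b(H_{p+q}) in the Weyl superalgebra, where the bracket of two odd elements is the anticommutator: tᵖ∂_θ(-2t^qθD - 4bq t^qθ) + (-2t^qθD - 4bq t^qθ)tᵖ∂_θ = 2(-t^{p+q}D - ((p+q)/2)t^{p+q}θ∂_θ - (p+q)b t^{p+q}) - (p-q)(t^{p+q}θ∂_θ - 2b t^{p+q}). -/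
/-- `t^k` for `k : ℤ`, using `tinv` for negative powers. -/
noncomputable def tzpow {R : Type*} [Ring R] (t tinv : R) (k : ℤ) : R :=
  if 0 ≤ k then t ^ k.toNat else tinv ^ (-k).toNat

/-- `σ_b(L_m) = -tᵐD - (m/2)tᵐθ∂_θ - mb tᵐ` with `D = t∂_t`. -/
noncomputable def sigL {R : Type*} [Ring R] [Algebra ℂ R] (t tinv dt th dth : R)
    (b : ℂ) (m : ℤ) : R :=
  -(tzpow t tinv m * (t * dt)) - ((m : ℂ) / 2) • (tzpow t tinv m * (th * dth))
    - ((m : ℂ) * b) • tzpow t tinv m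

/-- `σ_b(H_m) = tᵐθ∂_θ - 2b tᵐ`. -/
noncomputable def sigH {R : Type*} [Ring R] [Algebra ℂ R] (t tinv dt th dth : R)
    (b : ℂ) (m : ℤ) : R :=
  tzpow t tinv m * (th * dth) - (2 * b) • tzpow t tinv m

/-- `σ_b(G⁺_m) = -2tᵐθD - 4bm tᵐθ`. -/
noncomputable def sigGp {R : Type*} [Ring R] [Algebra ℂ R] (t tinv dt th dth : R)
    (b : ℂ) (m : ℤ) : R :=
  (-2 : ℂ) • (tzpow t tinv m * (th * (t * dt))) - (4 * b * (m : ℂ)) • (tzpow t tinv m * th)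

/-- `σ_b(G⁻_m) = tᵐ∂_θ`. -/
noncomputable def sigGm {R : Type*} [Ring R] (t tinv dth : R) (m : ℤ) : R :=
  tzpow t tinv m * dth

lemma tz_unit {R : Type*} [Ring R] (t tinv : R) (h2 : t * tinv = 1) (h3 : tinv * t = 1)
    (k : ℤ) : tzpow t tinv k = (((⟨t, tinv, h2, h3⟩ : Rˣ) ^ k : Rˣ) : R) := by
  unfold tzpow
  by_cases hk : 0 ≤ k
  · rw [if_pos hk]
    conv_rhs => rw [show k = (k.toNat : ℤ) by omega]
    rw [zpow_natCast, Units.val_pow_eq_pow_val]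
  · rw [if_neg hk]
    conv_rhs => rw [show k = -(((-k).toNat : ℤ)) by omega]
    rw [zpow_neg, zpow_natCast, ← inv_pow, Units.val_pow_eq_pow_val]; rfl

lemma tz_mul {R : Type*} [Ring R] (t tinv : R) (h2 : t * tinv = 1) (h3 : tinv * t = 1)
    (p q : ℤ) : tzpow t tinv p * tzpow t tinv q = tzpow t tinv (p + q) := by
  rw [tz_unit t tinv h2 h3 p, tz_unit t tinv h2 h3 q, tz_unit t tinv h2 h3 (p+q),
    ← Units.val_mul, ← zpow_add]

lemma comm_tz {R : Type*} [Ring R] (t tinv x : R)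
    (ha : x * t = t * x) (hb : x * tinv = tinv * x) (k : ℤ) :
    x * tzpow t tinv k = tzpow t tinv k * x := by
  unfold tzpow
  split
  · exact ((Commute.pow_right (show Commute x t from ha) _)).eq
  · exact ((Commute.pow_right (show Commute x tinv from hb) _)).eq

lemma dt_tinv {R : Type*} [Ring R] (t tinv dt : R)
    (h1 : dt * t - t * dt = 1) (h2 : t * tinv = 1) (h3 : tinv * t = 1) :
    dt * tinv = tinv * dt - tinv * tinv := by
  have h1' : dt * t = 1 + t * dt := by rw [← h1]; abel
  have key : tinv * dt = tinv * tinv + dt * tinv := by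
    calc tinv * dt = tinv * dt * (t * tinv) := by rw [h2, mul_one]
      _ = tinv * (dt * t) * tinv := by noncomm_ring
      _ = tinv * (1 + t * dt) * tinv := by rw [h1']
      _ = tinv * tinv + tinv * t * (dt * tinv) := by noncomm_ring
      _ = tinv * tinv + dt * tinv := by rw [h3, one_mul]
  rw [key]; abel

lemma dt_pow_t {R : Type*} [Ring R] [Algebra ℂ R] (t dt : R)
    (h1 : dt * t - t * dt = 1) : ∀ n : ℕ,
    dt * t ^ (n + 1) = t ^ (n + 1) * dt + ((n : ℂ) + 1) • t ^ n := by
  have h1' : dt * t = 1 + t * dt := by rw [← h1]; abel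
  intro n
  induction n with
  | zero => simp only [zero_add, pow_one, pow_zero, one_smul, h1']; push_cast; module
  | succ n ih =>
    rw [pow_succ (n := n + 1), ← mul_assoc, ih]
    simp only [h1', add_mul, mul_add, smul_mul_assoc, mul_smul_comm, mul_assoc, pow_succ,
      mul_one, one_mul]
    push_cast
    module

lemma dt_pow_tinv {R : Type*} [Ring R] [Algebra ℂ R] (t tinv dt : R)
    (h1 : dt * t - t * dt = 1) (h2 : t * tinv = 1) (h3 : tinv * t = 1) : ∀ n : ℕ,
    dt * tinv ^ (n + 1) = tinv ^ (n + 1) * dt - ((n : ℂ) + 1) • tinv ^ (n + 2) := by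
  have key := dt_tinv t tinv dt h1 h2 h3
  intro n
  induction n with
  | zero =>
    simp only [zero_add, pow_one, one_smul, key, pow_two, pow_succ, pow_zero, one_mul]
    push_cast; module
  | succ n ih =>
    rw [pow_succ (n := n + 1), ← mul_assoc, ih]
    simp only [key, sub_mul, mul_sub, smul_mul_assoc, mul_smul_comm, mul_assoc, pow_succ,
      mul_one, one_mul]
    push_cast
    module

lemma dt_tz {R : Type*} [Ring R] [Algebra ℂ R] (t tinv dt : R)
    (h1 : dt * t - t * dt = 1) (h2 : t * tinv = 1) (h3 : tinv * t = 1) (k : ℤ) :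
    dt * tzpow t tinv k = tzpow t tinv k * dt + (k : ℂ) • tzpow t tinv (k - 1) := by
  rcases lt_trichotomy k 0 with hk | hk | hk
  · obtain ⟨n, rfl⟩ : ∃ n : ℕ, k = -((n : ℤ) + 1) := ⟨(-k - 1).toNat, by omega⟩
    have e1 : tzpow t tinv (-((n : ℤ) + 1)) = tinv ^ (n + 1) := by
      unfold tzpow; rw [if_neg (by omega)]; congr 1
    have e2 : tzpow t tinv (-((n : ℤ) + 1) - 1) = tinv ^ (n + 2) := by
      unfold tzpow; rw [if_neg (by omega)]; congr 1
    rw [e1, e2, dt_pow_tinv t tinv dt h1 h2 h3 n]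
    push_cast
    module
  · subst hk
    have e1 : tzpow t tinv 0 = 1 := by unfold tzpow; simp
    simp [e1]
  · obtain ⟨n, rfl⟩ : ∃ n : ℕ, k = (n : ℤ) + 1 := ⟨(k - 1).toNat, by omega⟩
    have e1 : tzpow t tinv ((n : ℤ) + 1) = t ^ (n + 1) := by
      unfold tzpow; rw [if_pos (by omega)]; congr 1
    have e2 : tzpow t tinv ((n : ℤ) + 1 - 1) = t ^ n := by
      unfold tzpow; rw [if_pos (by omega)]; congr 1; omega
    rw [e1, e2, dt_pow_t t dt h1 n]
    push_cast
    module

/-- In the Weyl superalgebra, the twisted operators satisfy the odd-odd relation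
`[σ_b(G⁻_p), σ_b(G⁺_q)] = 2σ_b(L_{p+q}) - (p-q)σ_b(H_{p+q})`, the bracket of two odd
elements being the anticommutator. -/
theorem stmt10 {R : Type*} [Ring R] [Algebra ℂ R] (t tinv dt th dth : R) (b : ℂ)
    (h1 : dt * t - t * dt = 1) (h2 : t * tinv = 1) (h3 : tinv * t = 1)
    (h4 : dth * th + th * dth = 1) (h5 : th * th = 0) (h6 : dth * dth = 0)
    (h7 : t * th = th * t) (h8 : t * dth = dth * t)
    (h9 : dt * th = th * dt) (h10 : dt * dth = dth * dt)
    (h11 : tinv * th = th * tinv) (h12 : tinv * dth = dth * tinv) :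
    ∀ p q : ℤ,
      sigGm t tinv dth p * sigGp t tinv dt th dth b q
        + sigGp t tinv dt th dth b q * sigGm t tinv dth p
      = (2 : ℂ) • sigL t tinv dt th dth b (p + q)
        - ((p : ℂ) - q) • sigH t tinv dt th dth b (p + q) := by

  intro p q
  have tzm' := tz_mul t tinv h2 h3
  have tzm : ∀ (a c : ℤ) (x : R),
      tzpow t tinv a * (tzpow t tinv c * x) = tzpow t tinv (a + c) * x := fun a c x => by
    rw [← mul_assoc, tzm']
  have cth : ∀ k, th * tzpow t tinv k = tzpow t tinv k * th :=
    comm_tz t tinv th h7.symm h11.symm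
  have cth' : ∀ k (x : R), th * (tzpow t tinv k * x) = tzpow t tinv k * (th * x) :=
    fun k x => by rw [← mul_assoc, cth, mul_assoc]
  have cdth : ∀ k, dth * tzpow t tinv k = tzpow t tinv k * dth :=
    comm_tz t tinv dth h8.symm h12.symm
  have cdth' : ∀ k (x : R), dth * (tzpow t tinv k * x) = tzpow t tinv k * (dth * x) :=
    fun k x => by rw [← mul_assoc, cdth, mul_assoc]
  have ddt := dt_tz t tinv dt h1 h2 h3
  have ddt' : ∀ k (x : R), dt * (tzpow t tinv k * x)
      = tzpow t tinv k * (dt * x) + (k : ℂ) • (tzpow t tinv (k - 1) * x) := fun k x => by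
    rw [← mul_assoc, ddt, add_mul, smul_mul_assoc, mul_assoc]
  have ht1 : tzpow t tinv 1 = t := by unfold tzpow; simp
  have ht : ∀ x : R, t * x = tzpow t tinv 1 * x := fun x => by rw [ht1]
  have h4a : dth * th = 1 - th * dth := by rw [eq_sub_iff_add_eq]; exact h4
  have h4b : ∀ x : R, dth * (th * x) = x - th * (dth * x) := fun x => by
    rw [← mul_assoc, h4a, sub_mul, one_mul, mul_assoc]
  have h9b : ∀ x : R, dt * (th * x) = th * (dt * x) := fun x => by
    rw [← mul_assoc, h9, mul_assoc]
  have h10a : dth * dt = dt * dth := h10.symm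
  have h10b : ∀ x : R, dth * (dt * x) = dt * (dth * x) := fun x => by
    rw [← mul_assoc, h10a, mul_assoc]
  have h8a : dth * t = t * dth := h8.symm
  have h8b : ∀ x : R, dth * (t * x) = t * (dth * x) := fun x => by
    rw [← mul_assoc, h8a, mul_assoc]
  simp only [sigGm, sigGp, sigL, sigH]
  simp only [mul_add, add_mul, mul_sub, sub_mul, mul_smul_comm, smul_mul_assoc, mul_assoc,
    smul_sub, smul_add, smul_smul, ht, tzm, tzm', cth, cth', cdth, cdth', ddt, ddt',
    h4a, h4b, h9, h9b, h10a, h10b, h8a, h8b, mul_one, one_mul]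
  ring_nf
  match_scalars <;> push_cast <;> ring
end

section
/- Key averaging identity (Lemma on T_{k,d}): for any b ∈ ℂ, integers k and d with d ≠ 0, in the Weyl superalgebra the element (1/(4d²))(σ_b(L_{-d})σ_b(G^+_{k+d}) + σ_b(L_d)σ_b(G^+_{k-d}) - 2σ_b(L_0)σ_b(G^+_k)) equals b(1-2b)·tᵏθ. In particular if b ∉ {0, 1/2}, tᵏθ lies in the associative subalgebra generated by the operators σ_b(L_m), σ_b(G^+_n). -/
/-! Write `t` as a unit `u` and `D = t ∂_t`. Then `D tᵐ = tᵐ (D + m)`, while `θ ∂_θ` commutes with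
`tᵐ` and satisfies `θ ∂_θ θ = θ`. Hence `σ_b(L_n) σ_b(G⁺_{k-n})` is `tᵏ θ` times a polynomial in `D`
that is quadratic in `n` with leading coefficient `2b(1-2b)`, and the second difference at
`n = -d, 0, d` isolates `4d² b(1-2b) tᵏθ`. When `b(1-2b) ≠ 0` this writes `tᵏθ` as a linear
combination of products of generators. -/
theorem tzpow_units_eq_zpow {R : Type*} [Ring R] (u : Rˣ) (k : ℤ) :
    tzpow (u : R) ↑u⁻¹ k = ↑(u ^ k) := by
  unfold tzpow
  split_ifs with hk
  · lift k to ℕ using hk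
    simp
  · obtain ⟨n, rfl⟩ : ∃ n : ℕ, k = -n := ⟨(-k).toNat, by omega⟩
    simp

theorem second_difference_of_quadratic {K M : Type*} [CommRing K] [AddCommGroup M] [Module K M]
    (f : ℤ → M) (A B C : M) (hf : ∀ n : ℤ, f n = A + (n : K) • B + (n : K) ^ 2 • C) (d : ℤ) :
    f (-d) + f d - (2 : K) • f 0 = (2 * (d : K) ^ 2) • C := by
  simp only [hf]
  push_cast
  module

section
variable {R : Type*} [Ring R] {u : Rˣ}

theorem mul_units_zpow_of_mul_eq_add {x : R} (h : x * u = u * x + u) (k : ℤ) :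
    x * ↑(u ^ k) = ↑(u ^ k) * x + k • ↑(u ^ k) := by
  have h_inv : x * ↑u⁻¹ = ↑u⁻¹ * x - ↑u⁻¹ := by
    have := congr_arg (fun y : R => ↑u⁻¹ * y * ↑u⁻¹) h
    simp only [mul_add, add_mul, mul_assoc, Units.mul_inv, mul_one,
      Units.inv_mul_cancel_left] at this
    rw [this]; abel
  induction k using Int.induction_on with
  | zero => simp
  | succ i ih =>
    rw [zpow_add_one, Units.val_mul, ← mul_assoc, ih, add_mul, mul_assoc, h, add_smul, one_smul,
      smul_mul_assoc]
    noncomm_ring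
  | pred i ih =>
    rw [zpow_sub_one, Units.val_mul, ← mul_assoc, ih, add_mul, mul_assoc, h_inv, sub_smul, one_smul,
      smul_mul_assoc]
    noncomm_ring

theorem units_zpow_mul_zpow_mul (n m : ℤ) (y : R) :
    ↑(u ^ n) * (↑(u ^ m) * y) = ↑(u ^ (n + m)) * y := by
  rw [← mul_assoc, ← Units.val_mul, ← zpow_add]

theorem units_zpow_mul_mul_zpow_mul_of_mul_eq_add {x : R} (h : x * u = u * x + u) (n m : ℤ)
    (y : R) : ↑(u ^ n) * x * (↑(u ^ m) * y)
      = ↑(u ^ (n + m)) * (x * y) + m • (↑(u ^ (n + m)) * y) := by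
  rw [mul_assoc, ← mul_assoc x, mul_units_zpow_of_mul_eq_add h, add_mul, mul_add, mul_assoc,
    units_zpow_mul_zpow_mul, smul_mul_assoc, mul_smul_comm, units_zpow_mul_zpow_mul]

theorem units_zpow_mul_mul_zpow_mul_of_commute {e θ : R} (he : Commute e u) (heθ : e * θ = θ)
    (n m : ℤ) (y : R) : ↑(u ^ n) * e * (↑(u ^ m) * (θ * y)) = ↑(u ^ (n + m)) * (θ * y) := by
  rw [mul_assoc, he.units_zpow_right m |>.left_comm, ← mul_assoc e, heθ, units_zpow_mul_zpow_mul]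

end

theorem sigL_mul_sigGp_sub {R : Type*} [Ring R] [Algebra ℂ R] (u : Rˣ) (dt θ dth : R) (b : ℂ)
    (hcomm : dt * u - u * dt = 1) (hanti : dth * θ + θ * dth = 1) (hθθ : θ * θ = 0)
    (huθ : Commute (u : R) θ) (hudth : Commute (u : R) dth) (hdtθ : Commute dt θ) (k n : ℤ) :
    sigL (u : R) ↑u⁻¹ dt θ dth b n * sigGp (u : R) ↑u⁻¹ dt θ dth b (k - n)
      = ((2 : ℂ) • (↑(u ^ k) * (θ * ((u * dt) * (u * dt))))
          + (2 * (2 * b + 1) * k) • (↑(u ^ k) * (θ * (u * dt)))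
          + (4 * b * k ^ 2) • (↑(u ^ k) * θ))
        + (n : ℂ) • ((-(2 * b + 1)) • (↑(u ^ k) * (θ * (u * dt)))
          + (2 * k * b * (2 * b - 3)) • (↑(u ^ k) * θ))
        + (n : ℂ) ^ 2 • ((2 * b * (1 - 2 * b)) • (↑(u ^ k) * θ)) := by
  unfold sigL sigGp
  set D : R := u * dt
  have hD : D * u = u * D + u := by
    rw [mul_assoc, sub_eq_iff_eq_add'.mp hcomm, mul_add, mul_one]
  have hDθ : Commute D θ := huθ.mul_left hdtθ
  have he : Commute (θ * dth) u := huθ.symm.mul_left hudth.symm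
  have heθ : θ * dth * θ = θ := by
    rw [mul_assoc, eq_sub_of_add_eq hanti, mul_sub, mul_one, ← mul_assoc, hθθ, zero_mul, sub_zero]
  have heθ₁ (n m : ℤ) : ↑(u ^ n) * (θ * dth) * (↑(u ^ m) * θ) = ↑(u ^ (n + m)) * θ := by
    simpa using units_zpow_mul_mul_zpow_mul_of_commute he heθ n m 1
  simp only [tzpow_units_eq_zpow, sub_mul, mul_sub, neg_mul, smul_mul_assoc,
    mul_smul_comm, units_zpow_mul_mul_zpow_mul_of_mul_eq_add hD, units_zpow_mul_zpow_mul,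
    units_zpow_mul_mul_zpow_mul_of_commute he heθ, hDθ.left_comm, hDθ.eq, heθ₁, add_sub_cancel,
    ← Int.cast_smul_eq_zsmul ℂ]
  match_scalars <;> ring

theorem sigL_mul_sigGp_second_difference {R : Type*} [Ring R] [Algebra ℂ R] (u : Rˣ)
    (dt θ dth : R) (b : ℂ) (hcomm : dt * u - u * dt = 1) (hanti : dth * θ + θ * dth = 1)
    (hθθ : θ * θ = 0) (huθ : Commute (u : R) θ) (hudth : Commute (u : R) dth) (hdtθ : Commute dt θ)
    (k d : ℤ) (hd : d ≠ 0) :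
    (1 / (4 * (d : ℂ) ^ 2)) •
        (sigL (u : R) ↑u⁻¹ dt θ dth b (-d) * sigGp (u : R) ↑u⁻¹ dt θ dth b (k + d)
          + sigL (u : R) ↑u⁻¹ dt θ dth b d * sigGp (u : R) ↑u⁻¹ dt θ dth b (k - d)
          - (2 : ℂ) • (sigL (u : R) ↑u⁻¹ dt θ dth b 0 * sigGp (u : R) ↑u⁻¹ dt θ dth b k))
      = (b * (1 - 2 * b)) • (tzpow (u : R) ↑u⁻¹ k * θ) := by
  have hdiff := second_difference_of_quadratic _ _ _ _
    (sigL_mul_sigGp_sub u dt θ dth b hcomm hanti hθθ huθ hudth hdtθ k) d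
  rw [sub_neg_eq_add, sub_zero] at hdiff
  have hd' : (d : ℂ) ≠ 0 := Int.cast_ne_zero.mpr hd
  rw [hdiff, smul_smul, smul_smul, tzpow_units_eq_zpow]
  congr 1
  field_simp
  ring

theorem stmt11_general {R : Type*} [Ring R] [Algebra ℂ R] (t tinv dt th dth : R) (b : ℂ)
    (h1 : dt * t - t * dt = 1) (h2 : t * tinv = 1) (h3 : tinv * t = 1)
    (h4 : dth * th + th * dth = 1) (h5 : th * th = 0)
    (h7 : t * th = th * t) (h8 : t * dth = dth * t)
    (h9 : dt * th = th * dt) :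
    ∀ k d : ℤ, d ≠ 0 →
      (1 / (4 * (d : ℂ) ^ 2)) •
          (sigL t tinv dt th dth b (-d) * sigGp t tinv dt th dth b (k + d)
            + sigL t tinv dt th dth b d * sigGp t tinv dt th dth b (k - d)
            - (2 : ℂ) • (sigL t tinv dt th dth b 0 * sigGp t tinv dt th dth b k))
        = (b * (1 - 2 * b)) • (tzpow t tinv k * th) ∧
      (b ≠ 0 → b ≠ 1/2 →
        tzpow t tinv k * th ∈ Algebra.adjoin ℂ
          {x : R | ∃ m : ℤ, x = sigL t tinv dt th dth b m ∨ x = sigGp t tinv dt th dth b m}) := by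
  obtain ⟨u, rfl, rfl⟩ : ∃ u : Rˣ, (u : R) = t ∧ ↑u⁻¹ = tinv := ⟨⟨t, tinv, h2, h3⟩, rfl, rfl⟩
  intro k d hd
  have key := sigL_mul_sigGp_second_difference u dt th dth b h1 h4 h5 h7 h8 h9 k d hd
  refine ⟨key, fun hb₀ hb₁ => ?_⟩
  have hc : b * (1 - 2 * b) ≠ 0 :=
    mul_ne_zero hb₀ fun h => hb₁ (by linear_combination -h / 2)
  rw [← inv_smul_smul₀ hc (tzpow _ _ k * th), ← key]
  refine Subalgebra.smul_mem _ (Subalgebra.smul_mem _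
    (sub_mem (add_mem ?_ ?_) (Subalgebra.smul_mem _ ?_ _)) _) _
  all_goals
    exact mul_mem (Algebra.subset_adjoin ⟨_, .inl rfl⟩) (Algebra.subset_adjoin ⟨_, .inr rfl⟩)

/-- Key averaging identity: in the Weyl superalgebra, for any `b ∈ ℂ`, `k ∈ ℤ` and
`d ∈ ℤ*`, the element
`(1/(4d²))(σ_b(L_{-d})σ_b(G⁺_{k+d}) + σ_b(L_d)σ_b(G⁺_{k-d}) - 2σ_b(L_0)σ_b(G⁺_k))`
equals `b(1-2b) tᵏθ`; in particular, if `b ∉ {0, 1/2}` then `tᵏθ` lies in the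
subalgebra generated by the operators `σ_b(L_m)` and `σ_b(G⁺_n)`. -/
theorem stmt11 {R : Type*} [Ring R] [Algebra ℂ R] (t tinv dt th dth : R) (b : ℂ)
    (h1 : dt * t - t * dt = 1) (h2 : t * tinv = 1) (h3 : tinv * t = 1)
    (h4 : dth * th + th * dth = 1) (h5 : th * th = 0) (h6 : dth * dth = 0)
    (h7 : t * th = th * t) (h8 : t * dth = dth * t)
    (h9 : dt * th = th * dt) (h10 : dt * dth = dth * dt)
    (h11 : tinv * th = th * tinv) (h12 : tinv * dth = dth * tinv) :
    ∀ k d : ℤ, d ≠ 0 →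
      (1 / (4 * (d : ℂ) ^ 2)) •
          (sigL t tinv dt th dth b (-d) * sigGp t tinv dt th dth b (k + d)
            + sigL t tinv dt th dth b d * sigGp t tinv dt th dth b (k - d)
            - (2 : ℂ) • (sigL t tinv dt th dth b 0 * sigGp t tinv dt th dth b k))
        = (b * (1 - 2 * b)) • (tzpow t tinv k * th) ∧
      (b ≠ 0 → b ≠ 1/2 →
        tzpow t tinv k * th ∈ Algebra.adjoin ℂ
          {x : R | ∃ m : ℤ, x = sigL t tinv dt th dth b m ∨ x = sigGp t tinv dt th dth b m}) :=
  stmt11_general t tinv dt th dth b h1 h2 h3 h4 h5 h7 h8 h9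
end

section
/- The map M ↦ 𝒮(M) = M ⊕ M̄ is injective on isomorphism classes: for simple 𝒟-modules M₁ and M₂, the 𝒮𝒟-modules 𝒮(M₁) and 𝒮(M₂) are isomorphic if and only if M₁ ≅ M₂ as 𝒟-modules. -/
/-! Writing `θ(v, w) = (0, v)` and `∂_θ(v, w) = (w, 0)`, an isomorphism `e` commuting with both
must satisfy `e(z, 0) = ∂_θ e(0, z) = ∂_θ θ e(z, 0)`, so it maps `M₁ × 0` into `M₂ × 0` and
`0 × M₁` into `0 × M₂` by one and the same block `f`. Hence `e = f × f`, and `f` is a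
`𝒟`-isomorphism because `e` is. -/

namespace LinearEquiv

variable {R M N : Type*} [Semiring R] [AddCommMonoid M] [AddCommMonoid N] [Module R M]
  [Module R N]

def diagBlock (e : (M × M) ≃ₗ[R] (N × N)) : M →ₗ[R] N :=
  LinearMap.fst R N N ∘ₗ e.toLinearMap ∘ₗ LinearMap.inl R M M

variable {e : (M × M) ≃ₗ[R] (N × N)}

theorem eq_prodMap_diagBlock (hθ : ∀ v : M × M, e (0, v.1) = (0, (e v).1))
    (hdθ : ∀ v : M × M, e (v.2, 0) = ((e v).2, 0)) :
    ⇑e = Prod.map (diagBlock e) (diagBlock e) := by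
  have h_inl : ∀ z : M, e (z, 0) = (diagBlock e z, 0) := fun z => by
    simpa [diagBlock, hθ (z, 0)] using hdθ (0, z)
  have h_inr : ∀ z : M, e (0, z) = (0, diagBlock e z) := fun z => by
    simpa [h_inl z] using hθ (z, 0)
  funext ⟨x, y⟩
  rw [← Prod.fst_add_snd (x, y), map_add, h_inl, h_inr]
  simp

theorem diagBlock_bijective (hθ : ∀ v : M × M, e (0, v.1) = (0, (e v).1))
    (hdθ : ∀ v : M × M, e (v.2, 0) = ((e v).2, 0)) : Function.Bijective (diagBlock e) := by
  have he := e.bijective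
  rw [eq_prodMap_diagBlock hθ hdθ] at he
  exact ⟨(Prod.map_injective.mp he.1).1, (Prod.map_surjective.mp he.2).1⟩

end LinearEquiv

theorem stmt14_general {M₁ M₂ : Type*} [AddCommGroup M₁] [Module ℂ M₁] [AddCommGroup M₂] [Module ℂ M₂]
    (T₁ Ti₁ D₁ : M₁ →ₗ[ℂ] M₁) (T₂ Ti₂ D₂ : M₂ →ₗ[ℂ] M₂) :
    (∃ e : (M₁ × M₁) ≃ₗ[ℂ] (M₂ × M₂),
      (∀ v : M₁ × M₁, e (T₁ v.1, T₁ v.2) = (T₂ (e v).1, T₂ (e v).2)) ∧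
      (∀ v : M₁ × M₁, e (Ti₁ v.1, Ti₁ v.2) = (Ti₂ (e v).1, Ti₂ (e v).2)) ∧
      (∀ v : M₁ × M₁, e (D₁ v.1, D₁ v.2) = (D₂ (e v).1, D₂ (e v).2)) ∧
      (∀ v : M₁ × M₁, e ((0 : M₁), v.1) = ((0 : M₂), (e v).1)) ∧
      (∀ v : M₁ × M₁, e (v.2, (0 : M₁)) = ((e v).2, (0 : M₂))))
    ↔ (∃ e : M₁ ≃ₗ[ℂ] M₂,
      (∀ v, e (T₁ v) = T₂ (e v)) ∧ (∀ v, e (Ti₁ v) = Ti₂ (e v)) ∧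
      (∀ v, e (D₁ v) = D₂ (e v))) := by
  constructor
  · rintro ⟨e, hT, hTi, hD, hθ, hdθ⟩
    have he := LinearEquiv.eq_prodMap_diagBlock hθ hdθ
    have intertwines : ∀ {A : M₁ → M₁} {B : M₂ → M₂},
        (∀ v : M₁ × M₁, e (A v.1, A v.2) = (B (e v).1, B (e v).2)) →
          ∀ v, e.diagBlock (A v) = B (e.diagBlock v) := fun h v => by
      simpa [he] using congrArg Prod.fst (h (v, v))
    exact ⟨.ofBijective _ (LinearEquiv.diagBlock_bijective hθ hdθ),
      intertwines hT, intertwines hTi, intertwines hD⟩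
  · rintro ⟨e, hT, hTi, hD⟩
    refine ⟨e.prodCongr e, ?_, ?_, ?_, ?_, ?_⟩ <;> intro v <;> simp [hT, hTi, hD]

/-- The functor `𝒮` is injective on isomorphism classes: for simple `𝒟`-modules `M₁, M₂`,
the `𝒮𝒟`-modules `𝒮(M₁) = M₁ ⊕ M̄₁` and `𝒮(M₂) = M₂ ⊕ M̄₂` (with `𝒟` acting diagonally,
`θ·(v,w) = (0,v)`, `∂_θ·(v,w) = (w,0)`) are isomorphic iff `M₁ ≅ M₂` as `𝒟`-modules. -/
theorem stmt14 {M₁ M₂ : Type*} [AddCommGroup M₁] [Module ℂ M₁] [AddCommGroup M₂] [Module ℂ M₂]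
    (T₁ Ti₁ D₁ : M₁ →ₗ[ℂ] M₁) (T₂ Ti₂ D₂ : M₂ →ₗ[ℂ] M₂)
    (h1 : D₁.comp T₁ - T₁.comp D₁ = LinearMap.id)
    (h2 : T₁.comp Ti₁ = LinearMap.id) (h3 : Ti₁.comp T₁ = LinearMap.id)
    (h1' : D₂.comp T₂ - T₂.comp D₂ = LinearMap.id)
    (h2' : T₂.comp Ti₂ = LinearMap.id) (h3' : Ti₂.comp T₂ = LinearMap.id)
    (hs₁ : ∀ N : Submodule ℂ M₁,
      (∀ v ∈ N, T₁ v ∈ N) → (∀ v ∈ N, Ti₁ v ∈ N) → (∀ v ∈ N, D₁ v ∈ N) → N = ⊥ ∨ N = ⊤)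
    (hs₂ : ∀ N : Submodule ℂ M₂,
      (∀ v ∈ N, T₂ v ∈ N) → (∀ v ∈ N, Ti₂ v ∈ N) → (∀ v ∈ N, D₂ v ∈ N) → N = ⊥ ∨ N = ⊤) :
    (∃ e : (M₁ × M₁) ≃ₗ[ℂ] (M₂ × M₂),
      (∀ v : M₁ × M₁, e (T₁ v.1, T₁ v.2) = (T₂ (e v).1, T₂ (e v).2)) ∧
      (∀ v : M₁ × M₁, e (Ti₁ v.1, Ti₁ v.2) = (Ti₂ (e v).1, Ti₂ (e v).2)) ∧
      (∀ v : M₁ × M₁, e (D₁ v.1, D₁ v.2) = (D₂ (e v).1, D₂ (e v).2)) ∧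
      (∀ v : M₁ × M₁, e ((0 : M₁), v.1) = ((0 : M₂), (e v).1)) ∧
      (∀ v : M₁ × M₁, e (v.2, (0 : M₁)) = ((e v).2, (0 : M₂))))
    ↔ (∃ e : M₁ ≃ₗ[ℂ] M₂,
      (∀ v, e (T₁ v) = T₂ (e v)) ∧ (∀ v, e (Ti₁ v) = Ti₂ (e v)) ∧
      (∀ v, e (D₁ v) = D₂ (e v))) :=
  stmt14_general T₁ Ti₁ D₁ T₂ Ti₂ D₂
end
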